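/- arXiv:2001.01566 — 15 statements merged into one kernel-verified Lean document; each statement's English description precedes it below -/
import Mathlib

section
/- Let (G,·) be a group and ∘ a binary operation on G, and for y ∈ G define γ(y) : G → G by γ(y)(x) = (x ∘ y)·y⁻¹. Assume that every γ(z) is multiplicative (γ(z)(x·y) = γ(z)(x)·γ(z)(y) for all x, y). Then ∘ is associative if and only if γ satisfies the gamma functional equation γ(γ(y)(x)·y)(g) = γ(y)(γ(x)(g)) for all g, x, y ∈ G (i.e. γ(x ∘ y) is the composite 'first γ(x), then γ(y)'). -/
/-- Assuming every `γ(z)` is multiplicative, `∘` is associative iff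
`γ` satisfies the gamma functional equation `γ(γ(y)(x)·y) = γ(x)γ(y)`
(composition written pointwise, applying `γ(x)` first). -/
theorem stmt1 {G : Type*} [Group G] (circ : G → G → G) (γ : G → G → G)
    (hγ : ∀ x y : G, γ y x = circ x y * y⁻¹)
    (hmul : ∀ z x y : G, γ z (x * y) = γ z x * γ z y) :
    (∀ x y z : G, circ (circ x y) z = circ x (circ y z)) ↔
      (∀ g x y : G, γ (γ y x * y) g = γ y (γ x g)) := by
  have hc : ∀ x y : G, circ x y = γ y x * y := by
    intro x y; rw [hγ]; group
  constructor
  · intro h g x y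
    have h1 := h g x y
    rw [hc (circ g x) y, hc g x, hmul, hc g (circ x y), hc x y] at h1
    -- h1 : γ y (γ x g) * γ y x * y = γ (γ y x * y) g * (γ y x * y)
    rw [← mul_assoc] at h1
    exact (mul_right_cancel (mul_right_cancel h1)).symm
  · intro h x y z
    rw [hc (circ x y) z, hc x y, hmul, hc x (circ y z), hc y z, h x y z,
      mul_assoc]
end

section
/- Let γ be a gamma function on a group (G,·). Then the operation x ∘ y := γ(y)(x)·y makes G into a group whose identity element is the identity of (G,·), the map γ is a group homomorphism from (G,∘) to Aut(G,·) (with composition taken as 'apply the first factor first'), and consequently ker(γ) = { g ∈ G : γ(g) = id } is a normal subgroup of (G,∘). -/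
/-- For a gamma function `γ` on `(G,·)`, the circle operation
`x ∘ y = γ(y)(x)·y` makes `G` a group with the same identity, `γ` is a homomorphism
from `(G,∘)` to `Aut(G,·)` (composition: apply the first factor first), and
`ker γ` is a normal subgroup of `(G,∘)`. -/
theorem stmt2 {G : Type*} [Group G] (γ : G → MulAut G)
    (hγ : ∀ x y g : G, γ (γ y x * y) g = γ y (γ x g))
    (circ : G → G → G) (hcirc : ∀ x y : G, circ x y = γ y x * y) :
    (∀ x y z : G, circ (circ x y) z = circ x (circ y z)) ∧
    (∀ x : G, circ x 1 = x) ∧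
    (∀ x : G, circ 1 x = x) ∧
    (∀ x : G, ∃ y : G, circ x y = 1 ∧ circ y x = 1) ∧
    (∀ x y g : G, γ (circ x y) g = γ y (γ x g)) ∧
    (∀ g k : G, γ k = 1 → ∃ k' : G, γ k' = 1 ∧ circ k g = circ g k') := by
  have h1 : γ (1:G) = 1 := by
    ext g
    have h := hγ 1 1 g
    rw [map_one, one_mul] at h
    simpa using (γ 1).injective h.symm
  have hassoc : ∀ x y z : G, circ (circ x y) z = circ x (circ y z) := by
    intro x y z
    simp only [hcirc, map_mul, hγ, mul_assoc]
  have hid_r : ∀ x : G, circ x 1 = x := by intro x; simp [hcirc, h1]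
  have hid_l : ∀ x : G, circ 1 x = x := by intro x; simp [hcirc]
  -- left inverse
  have hlinv : ∀ x : G, circ ((γ x).symm x⁻¹) x = 1 := by
    intro x; simp [hcirc]
  -- left inverse implies right inverse
  have hinv : ∀ x : G, ∃ y : G, circ x y = 1 ∧ circ y x = 1 := by
    intro x
    refine ⟨(γ x).symm x⁻¹, ?_, hlinv x⟩
    set y := (γ x).symm x⁻¹ with hy
    set z := (γ y).symm y⁻¹ with hz
    calc circ x y = circ (circ (circ z y) x) y := by rw [hlinv y, hid_l]
      _ = circ (circ z (circ y x)) y := by rw [hassoc z y x]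
      _ = circ z y := by rw [hlinv x, hid_r]
      _ = 1 := hlinv y
  have hhom : ∀ x y g : G, γ (circ x y) g = γ y (γ x g) := by
    intro x y g; rw [hcirc]; exact hγ x y g
  refine ⟨hassoc, hid_r, hid_l, hinv, hhom, ?_⟩
  intro g k hk
  obtain ⟨gi, hgri, hgli⟩ := hinv g
  refine ⟨circ gi (circ k g), ?_, ?_⟩
  · ext h
    have e1 : γ (circ gi (circ k g)) h = γ (circ k g) (γ gi h) := hhom gi (circ k g) h
    have e2 : ∀ h' : G, γ (circ k g) h' = γ g h' := by
      intro h'; rw [hhom k g h', hk]; rfl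
    have e3 : γ (circ gi g) h = γ g (γ gi h) := hhom gi g h
    rw [hgli, h1] at e3
    simp [e1, e2, ← e3]
  · rw [← hassoc, hgri, hid_l]
end

section
/- Let γ be a gamma function on a group (G,·) with circle operation x ∘ y = γ(y)(x)·y. Then the set N := { (x ↦ γ(y)(x)·y) : y ∈ G } is a subgroup of the symmetric group Sym(G) contained in the holomorph Hol(G), N acts regularly on G (transitively with trivial point stabilizers), and the map ν : (G,∘) → N sending y to the permutation x ↦ x ∘ y is a group isomorphism. -/
/-!
Write `ν y = ρ(y) · γ(y)`. Both factors lie in the holomorph, since an automorphism `φ`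
conjugates `ρ(g)` to `ρ(φ g)`. The gamma function identity says exactly that `ν` turns `∘` into
composition, and `ν y 1 = y`, so `ν` is injective and its image is closed under composition and
inversion. Finally, evaluation at `1` is a bijection from the image onto `G`; a subgroup of
`Sym(G)` that is regular at one point is regular at every point.
-/

open Equiv Function Set Subgroup

/-- The paper's `γ(γ(y)(x)·y) = γ(x)γ(y)`, written with Lean's composition order in `MulAut G`. -/
def IsGammaFunction {G : Type*} [Group G] (γ : G → MulAut G) : Prop :=
  ∀ x y : G, γ (γ y x * y) = γ y * γ x

def Subgroup.IsRegular {α : Type*} (N : Subgroup (Perm α)) : Prop :=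
  ∀ x z : α, ∃! p : Perm α, p ∈ N ∧ p x = z

theorem Subgroup.isRegular_of_existsUnique_apply {α : Type*} {N : Subgroup (Perm α)} (o : α)
    (h : ∀ z : α, ∃! p : Perm α, p ∈ N ∧ p o = z) : N.IsRegular := by
  intro x z
  obtain ⟨a, ⟨ha, hax⟩, -⟩ := h x
  obtain ⟨b, ⟨hb, hbz⟩, -⟩ := h z
  refine ⟨b * a⁻¹, ⟨mul_mem hb (inv_mem ha), by simp [← hax, hbz]⟩, ?_⟩
  rintro p ⟨hp, hpx⟩
  have hpa : p * a = b := (h z).unique ⟨mul_mem hp ha, by simp [hax, hpx]⟩ ⟨hb, hbz⟩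
  exact eq_mul_inv_of_mul_eq hpa

def holomorph (G : Type*) [Group G] : Subgroup (Perm G) :=
  normalizer (closure (range (Equiv.mulRight : G → Perm G)))

section Holomorph

variable {G : Type*} [Group G]

theorem mulRight_mem_holomorph (g : G) : Equiv.mulRight g ∈ holomorph G :=
  le_normalizer (subset_closure ⟨g, rfl⟩)

theorem MulAut.toPerm_mul_mulRight_mul_inv (φ : MulAut G) (g : G) :
    MulAut.toPerm G φ * Equiv.mulRight g * (MulAut.toPerm G φ)⁻¹ = Equiv.mulRight (φ g) := by
  ext x
  change φ (φ.symm x * g) = x * φ g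
  rw [map_mul, MulEquiv.apply_symm_apply]

theorem MulAut.toPerm_mem_holomorph (φ : MulAut G) : MulAut.toPerm G φ ∈ holomorph G := by
  refine normalizer_le_normalizer_closure _ ?_
  have : (MulAut.toPerm G).range ≤ normalizer (range Equiv.mulRight) := by
    rw [le_set_normalizer_iff]
    rintro _ ⟨ψ, rfl⟩ _ ⟨g, rfl⟩
    exact ⟨ψ g, (MulAut.toPerm_mul_mulRight_mul_inv ψ g).symm⟩
  exact this ⟨φ, rfl⟩

end Holomorph

section GammaFunction

variable {G : Type*} [Group G] {γ : G → MulAut G}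

/-- Right multiplication by `y` in the circle group: `x ↦ x ∘ y = γ(y)(x)·y`. -/
def circPerm (γ : G → MulAut G) (y : G) : Perm G :=
  (γ y).toEquiv.trans (Equiv.mulRight y)

@[simp]
theorem circPerm_apply (y x : G) : circPerm γ y x = γ y x * y := rfl

theorem circPerm_eq_mulRight_mul_toPerm (y : G) :
    circPerm γ y = Equiv.mulRight y * MulAut.toPerm G (γ y) := rfl

@[simp]
theorem circPerm_apply_one (y : G) : circPerm γ y 1 = y := by simp

theorem circPerm_injective : Injective (circPerm γ) := fun a b h => by
  simpa using congrArg (· 1) h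

theorem circPerm_mem_holomorph (y : G) : circPerm γ y ∈ holomorph G := by
  rw [circPerm_eq_mulRight_mul_toPerm]
  exact mul_mem (mulRight_mem_holomorph y) (MulAut.toPerm_mem_holomorph (γ y))

namespace IsGammaFunction

variable (hγ : IsGammaFunction γ)
include hγ

theorem map_one_eq_one : γ 1 = 1 := by
  have h : γ 1 = γ 1 * γ 1 := by simpa using hγ 1 1
  simpa using h.symm

theorem circPerm_one : circPerm γ 1 = 1 := by
  ext x
  simp [hγ.map_one_eq_one]

theorem circPerm_circ (x y : G) : circPerm γ (γ y x * y) = circPerm γ y * circPerm γ x := by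
  ext g
  simp [hγ x y, MulAut.mul_apply, mul_assoc]

theorem circPerm_inv (y : G) : circPerm γ ((γ y)⁻¹ y⁻¹) = (circPerm γ y)⁻¹ := by
  refine eq_inv_of_mul_eq_one_right ?_
  rw [← hγ.circPerm_circ, MulAut.apply_inv_self, inv_mul_cancel, hγ.circPerm_one]

def circPermSubgroup : Subgroup (Perm G) where
  carrier := range (circPerm γ)
  one_mem' := ⟨1, hγ.circPerm_one⟩
  mul_mem' := by
    rintro _ _ ⟨a, rfl⟩ ⟨b, rfl⟩
    exact ⟨γ a b * a, hγ.circPerm_circ b a⟩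
  inv_mem' := by
    rintro _ ⟨a, rfl⟩
    exact ⟨_, hγ.circPerm_inv a⟩

theorem coe_circPermSubgroup : (hγ.circPermSubgroup : Set (Perm G)) = range (circPerm γ) := rfl

theorem circPermSubgroup_le_holomorph : hγ.circPermSubgroup ≤ holomorph G := by
  rintro _ ⟨y, rfl⟩
  exact circPerm_mem_holomorph y

theorem isRegular_circPermSubgroup : hγ.circPermSubgroup.IsRegular := by
  refine isRegular_of_existsUnique_apply 1 fun z => ⟨circPerm γ z, ⟨⟨z, rfl⟩, by simp⟩, ?_⟩
  rintro _ ⟨⟨y, rfl⟩, hy⟩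
  rw [← hy, circPerm_apply_one]

end IsGammaFunction

end GammaFunction

/-- For a gamma function `γ` on `(G,·)` with circle operation
`x ∘ y = γ(y)(x)·y`, the set `N = { x ↦ γ(y)(x)·y : y ∈ G }` is a subgroup of
`Sym(G)` contained in the holomorph `Hol(G) = N_{Sym(G)}(ρ(G))`, `N` is regular,
and `ν : (G,∘) → N`, `y ↦ (x ↦ x ∘ y)` is a group isomorphism
(a bijective map with `ν(y₁ ∘ y₂) = ν(y₁)ν(y₂)`, applying `ν(y₁)` first). -/
theorem stmt3 {G : Type*} [Group G] (γ : G → MulAut G)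
    (hγ : ∀ x y g : G, γ (γ y x * y) g = γ y (γ x g))
    (circ : G → G → G) (hcirc : ∀ x y : G, circ x y = γ y x * y)
    (ν : G → Equiv.Perm G)
    (hν : ∀ y : G, ν y = (γ y).toEquiv.trans (Equiv.mulRight y))
    (ρ : G → Equiv.Perm G) (hρ : ∀ g : G, ρ g = Equiv.mulRight g)
    (Hol : Subgroup (Equiv.Perm G))
    (hHol : Hol = Subgroup.normalizer (Subgroup.closure (Set.range ρ))) :
    ∃ N : Subgroup (Equiv.Perm G),
      (N : Set (Equiv.Perm G)) = Set.range ν ∧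
      N ≤ Hol ∧
      (∀ x z : G, ∃! p : Equiv.Perm G, p ∈ N ∧ p x = z) ∧
      Function.Injective ν ∧
      (∀ y₁ y₂ x : G, ν (circ y₁ y₂) x = ν y₂ (ν y₁ x)) := by
  have hγ : IsGammaFunction γ := fun x y => MulEquiv.ext (hγ x y)
  obtain rfl : ν = circPerm γ := funext hν
  obtain rfl : ρ = Equiv.mulRight := funext hρ
  subst hHol
  refine ⟨hγ.circPermSubgroup, hγ.coe_circPermSubgroup, hγ.circPermSubgroup_le_holomorph,
    hγ.isRegular_circPermSubgroup, circPerm_injective, fun y₁ y₂ x => ?_⟩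
  rw [hcirc, hγ.circPerm_circ, Perm.mul_apply]
end

section
/- Let γ be a gamma function on a group (G,·) with circle operation x ∘ y = γ(y)(x)·y. If every γ(z) is an automorphism of (G,∘), i.e. γ(z)(x ∘ y) = γ(z)(x) ∘ γ(z)(y) for all x, y, z ∈ G, then γ(γ(z)(y)) = γ(z)⁻¹ γ(y) γ(z) for all y, z ∈ G, where the right-hand side is the conjugate of γ(y) by γ(z) in Aut(G,·). -/
/-- For a gamma function `γ` with circle operation `x ∘ y = γ(y)(x)·y`,
if every `γ(z)` is an automorphism of `(G,∘)`, then
`γ(γ(z)(y)) = γ(z)⁻¹ γ(y) γ(z)` (composition applying `γ(z)⁻¹` first). -/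
theorem stmt5 {G : Type*} [Group G] (γ : G → MulAut G)
    (hγ : ∀ x y g : G, γ (γ y x * y) g = γ y (γ x g))
    (circ : G → G → G) (hcirc : ∀ x y : G, circ x y = γ y x * y)
    (haut : ∀ x y z : G, γ z (circ x y) = circ (γ z x) (γ z y)) :
    ∀ y z g : G, γ (γ z y) g = γ z (γ y ((γ z)⁻¹ g)) := by
  intro y z g
  have h := haut ((γ z)⁻¹ g) y z
  rw [hcirc, hcirc, map_mul, MulAut.apply_inv_self] at h
  exact (mul_right_cancel h).symm
end

section
/- Let G be a group and γ : G → Aut(G) any map. Consider the three conditions: (i) γ satisfies the gamma functional equation γ(γ(y)(x)·y) = γ(x)γ(y) for all x, y ∈ G; (ii) γ is an anti-homomorphism, i.e. γ(x·y) = γ(y)γ(x) for all x, y ∈ G; (iii) γ(γ(y)(x)) = γ(y)⁻¹ γ(x) γ(y) for all x, y ∈ G. Then any two of these conditions imply the third. -/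
/-- For `γ : G → Aut(G)`, among the conditions
(i) the gamma functional equation `γ(γ(y)(x)·y) = γ(x)γ(y)`,
(ii) anti-homomorphism `γ(x·y) = γ(y)γ(x)`,
(iii) `γ(γ(y)(x)) = γ(y)⁻¹ γ(x) γ(y)`,
(all compositions applying the left factor first, written pointwise),
any two imply the third. -/
theorem stmt6 {G : Type*} [Group G] (γ : G → MulAut G) :
    (((∀ x y g : G, γ (γ y x * y) g = γ y (γ x g)) ∧
        (∀ x y g : G, γ (x * y) g = γ x (γ y g))) →
      (∀ x y g : G, γ (γ y x) g = γ y (γ x ((γ y)⁻¹ g)))) ∧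
    (((∀ x y g : G, γ (γ y x * y) g = γ y (γ x g)) ∧
        (∀ x y g : G, γ (γ y x) g = γ y (γ x ((γ y)⁻¹ g)))) →
      (∀ x y g : G, γ (x * y) g = γ x (γ y g))) ∧
    (((∀ x y g : G, γ (x * y) g = γ x (γ y g)) ∧
        (∀ x y g : G, γ (γ y x) g = γ y (γ x ((γ y)⁻¹ g)))) →
      (∀ x y g : G, γ (γ y x * y) g = γ y (γ x g))) := by
  refine ⟨?_, ?_, ?_⟩
  · rintro ⟨h1, h2⟩ x y g
    have := h1 x y ((γ y)⁻¹ g)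
    rw [h2 (γ y x) y ((γ y)⁻¹ g)] at this
    simpa using this
  · rintro ⟨h1, h3⟩ x y g
    have key := h1 ((γ y)⁻¹ x) y g
    have hx : γ y ((γ y)⁻¹ x) = x := by simp
    rw [hx] at key
    have key3 := h3 ((γ y)⁻¹ x) y (γ y g)
    rw [hx] at key3
    simp only [MulAut.inv_def, MulEquiv.symm_apply_apply] at key3
    rw [key, key3, MulAut.inv_def]
  · rintro ⟨h2, h3⟩ x y g
    rw [h2 (γ y x) y g, h3 x y (γ y g)]
    simp
end

section
/- Let γ be a gamma function on a group (G,·) with circle operation x ∘ y = γ(y)(x)·y, and suppose γ is an anti-homomorphism: γ(x·y) = γ(y)γ(x) for all x, y ∈ G. Then every γ(z) is an automorphism of the group (G,∘), the map γ'(y) := γ(y)⁻¹ satisfies γ'(y)(x) ∘ y = x·y for all x, y, and the skew brace axiom holds for (G,∘,·): (x ∘ y)·z = (x·z) ∘ z^{⊖} ∘ (y·z) for all x, y, z ∈ G, where z^{⊖} denotes the inverse of z in the group (G,∘). In other words, (G,·,∘) is a bi-skew brace. -/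
/-- If a gamma function `γ` on `(G,·)` (circle operation
`x ∘ y = γ(y)(x)·y`) is an anti-homomorphism `γ(x·y) = γ(y)γ(x)`, then every `γ(z)`
is an automorphism of `(G,∘)`, the map `γ'(y) = γ(y)⁻¹` satisfies
`γ'(y)(x) ∘ y = x·y`, and the skew brace axiom
`(x ∘ y)·z = (x·z) ∘ z^⊖ ∘ (y·z)` holds, where `z^⊖` is the `∘`-inverse of `z`;
that is, `(G,·,∘)` is a bi-skew brace. -/
theorem stmt7 {G : Type*} [Group G] (γ : G → MulAut G)
    (hγ : ∀ x y g : G, γ (γ y x * y) g = γ y (γ x g))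
    (circ : G → G → G) (hcirc : ∀ x y : G, circ x y = γ y x * y)
    (hanti : ∀ x y g : G, γ (x * y) g = γ x (γ y g)) :
    (∀ z x y : G, γ z (circ x y) = circ (γ z x) (γ z y)) ∧
    (∀ x y : G, circ ((γ y)⁻¹ x) y = x * y) ∧
    (∀ x y z zi : G, circ zi z = 1 → circ z zi = 1 →
      circ x y * z = circ (circ (x * z) zi) (y * z)) := by
  have key : ∀ b a g : G, γ (γ b a) (γ b g) = γ b (γ a g) := by
    intro b a g
    rw [← hanti, hγ]
  have hone : ∀ g : G, γ 1 g = g := by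
    intro g
    have h := hγ 1 1 g
    simp only [map_one, one_mul] at h
    exact ((γ (1:G)).injective h).symm
  refine ⟨?_, ?_, ?_⟩
  · intro z x y
    rw [hcirc, hcirc, map_mul, key]
  · intro x y
    rw [hcirc]
    simp
  · intro x y z zi h1 h2
    rw [hcirc] at h1
    -- h1 : γ z zi * z = 1
    have hzzi : γ z zi = z⁻¹ := by
      have := mul_eq_one_iff_eq_inv.mp h1
      simpa using this
    have hid : ∀ g : G, γ z (γ zi g) = g := by
      intro g
      rw [← hγ, h1, hone]
    rw [hcirc x y, hcirc (circ (x*z) zi) (y*z), hcirc (x*z) zi]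
    have : γ (y * z) (γ zi (x * z) * zi) = γ y x := by
      rw [hanti, map_mul, hid, hzzi]
      simp [mul_assoc, map_mul]
    rw [this]
    group
end

section
/- Let γ be a gamma function on a group (G,·) and let N = { (x ↦ γ(y)(x)·y) : y ∈ G } be the associated regular subgroup of Hol(G). Then N is normalized by ρ(G) (i.e. ρ(g)⁻¹ n ρ(g) ∈ N for all g ∈ G and n ∈ N) if and only if γ(x⁻¹·y⁻¹·γ(y)(x)·y) = id for all x, y ∈ G. Moreover, for all x, y ∈ G the commutator in Sym(G) satisfies [ρ(x), γ(y)ρ(y)] = ρ(x⁻¹·y⁻¹·γ(y)(x)·y). -/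
/-- For a gamma function `γ` on `(G,·)`, the associated regular subgroup
`N = { x ↦ γ(y)(x)·y : y ∈ G }` of `Hol(G)` is normalized by `ρ(G)` iff
`γ(x⁻¹·y⁻¹·γ(y)(x)·y) = 1` for all `x, y`; moreover the commutator
`[ρ(x), γ(y)ρ(y)]` (apply-left-first composition, computed pointwise)
equals `ρ(x⁻¹·y⁻¹·γ(y)(x)·y)`. -/
theorem stmt8 {G : Type*} [Group G] (γ : G → MulAut G)
    (hγ : ∀ x y g : G, γ (γ y x * y) g = γ y (γ x g))
    (ν : G → Equiv.Perm G)
    (hν : ∀ y : G, ν y = (γ y).toEquiv.trans (Equiv.mulRight y))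
    (ρ : G → Equiv.Perm G) (hρ : ∀ g : G, ρ g = Equiv.mulRight g) :
    ((∀ g y : G, ∃ y' : G, ∀ x : G, ρ g (ν y ((ρ g).symm x)) = ν y' x) ↔
      (∀ x y : G, γ (x⁻¹ * y⁻¹ * γ y x * y) = 1)) ∧
    (∀ x y g : G,
      ν y (ρ x ((ν y).symm ((ρ x).symm g))) = g * (x⁻¹ * y⁻¹ * γ y x * y)) := by
  -- γ 1 = 1
  have h1 : γ 1 = 1 := by
    ext g
    have := hγ 1 1 g
    simp only [map_one, one_mul, mul_one] at this
    have h2 := (γ 1).injective this.symm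
    simpa using h2
  -- inverse lemma
  have hinv : ∀ a : G, γ a = 1 → γ a⁻¹ = 1 := by
    intro a ha
    ext g
    have := hγ a⁻¹ a g
    rw [ha] at this
    simp only [MulAut.one_apply, inv_mul_cancel, h1] at this
    simpa using this.symm
  -- key computation: γ (γ y g⁻¹ * y * g) z = γ y (γ (g⁻¹ * (γ y).symm (y*g*y⁻¹)) z)
  have key : ∀ y g z : G,
      γ (γ y g⁻¹ * y * g) z = γ y (γ (g⁻¹ * (γ y).symm (y * g * y⁻¹)) z) := by
    intro y g z
    have h := hγ (g⁻¹ * (γ y).symm (y * g * y⁻¹)) y z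
    have he : γ y (g⁻¹ * (γ y).symm (y * g * y⁻¹)) * y = γ y g⁻¹ * y * g := by
      rw [map_mul, MulEquiv.apply_symm_apply]
      group
    rw [he] at h
    exact h
  constructor
  · constructor
    · -- normalized → condition
      intro hN x y
      set g : G := y⁻¹ * γ y x * y with hg
      obtain ⟨y', hy'⟩ := hN g y
      simp only [hν, hρ, Equiv.trans_apply, Equiv.coe_mulRight, MulEquiv.toEquiv_eq_coe, EquivLike.coe_coe,
        Equiv.mulRight_symm, Equiv.coe_mulRight, Equiv.symm_trans_apply,
        MulEquiv.coe_toEquiv_symm] at hy'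
      -- hy' : ∀ z, γ y (z * g⁻¹) * y * g = γ y' z * y'
      have hc : y' = γ y g⁻¹ * y * g := by
        have := hy' 1
        simpa using this.symm
      have heq : ∀ z, γ y z = γ (γ y g⁻¹ * y * g) z := by
        intro z
        have h := hy' z
        rw [hc] at h
        rw [map_mul] at h
        -- h : γ y z * γ y g⁻¹ * y * g = γ (c) z * c
        have : γ y z * (γ y g⁻¹ * y * g) = γ (γ y g⁻¹ * y * g) z * (γ y g⁻¹ * y * g) := by
          rw [← h]; group
        exact mul_right_cancel this
      -- deduce γ w = 1
      have hw : γ (g⁻¹ * (γ y).symm (y * g * y⁻¹)) = 1 := by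
        ext z
        have := heq z
        rw [key y g z] at this
        have := (γ y).injective this
        simpa using this.symm
      have hx : (γ y).symm (y * g * y⁻¹) = x := by
        rw [hg]
        have : y * (y⁻¹ * γ y x * y) * y⁻¹ = γ y x := by group
        rw [this, MulEquiv.symm_apply_apply]
      rw [hx] at hw
      have : x⁻¹ * y⁻¹ * γ y x * y = (g⁻¹ * x)⁻¹ := by rw [hg]; group
      rw [this]
      exact hinv _ hw
    · -- condition → normalized
      intro hC g y
      refine ⟨γ y g⁻¹ * y * g, ?_⟩
      intro z
      simp only [hν, hρ, Equiv.trans_apply, Equiv.coe_mulRight, MulEquiv.toEquiv_eq_coe, EquivLike.coe_coe,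
        Equiv.mulRight_symm, Equiv.coe_mulRight, Equiv.symm_trans_apply,
        MulEquiv.coe_toEquiv_symm]
      -- goal : γ y (z * g⁻¹) * y * g = γ (γ y g⁻¹ * y * g) z * (γ y g⁻¹ * y * g)
      have hw : γ (g⁻¹ * (γ y).symm (y * g * y⁻¹)) = 1 := by
        have h := hC ((γ y).symm (y * g * y⁻¹)) y
        rw [MulEquiv.apply_symm_apply] at h
        have he : ((γ y).symm (y * g * y⁻¹))⁻¹ * y⁻¹ * (y * g * y⁻¹) * y
            = (g⁻¹ * (γ y).symm (y * g * y⁻¹))⁻¹ := by group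
        rw [he] at h
        have := hinv _ h
        simpa using this
      rw [key y g z, hw]
      simp only [MulAut.one_apply]
      rw [map_mul]
      group
  · -- commutator
    intro x y g
    simp only [hν, hρ, Equiv.trans_apply, Equiv.coe_mulRight, MulEquiv.toEquiv_eq_coe, EquivLike.coe_coe,
      Equiv.mulRight_symm, Equiv.coe_mulRight, Equiv.symm_trans_apply,
      MulEquiv.coe_toEquiv_symm]
    rw [map_mul, MulEquiv.apply_symm_apply]
    group
end

section
/- Let γ be a gamma function on a group (G,·). Then γ is an anti-homomorphism (γ(x·y) = γ(y)γ(x) for all x, y ∈ G) if and only if γ(x⁻¹·y⁻¹·γ(y)(x)·y) = id for all x, y ∈ G. -/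
/-- A gamma function `γ` on `(G,·)` is an anti-homomorphism
(`γ(x·y) = γ(y)γ(x)`, pointwise `γ(x·y)(g) = γ(x)(γ(y)(g))`) iff
`γ(x⁻¹·y⁻¹·γ(y)(x)·y) = 1` for all `x, y ∈ G`. -/
theorem stmt9 {G : Type*} [Group G] (γ : G → MulAut G)
    (hγ : ∀ x y g : G, γ (γ y x * y) g = γ y (γ x g)) :
    (∀ x y g : G, γ (x * y) g = γ x (γ y g)) ↔
      (∀ x y : G, γ (x⁻¹ * y⁻¹ * γ y x * y) = 1) := by
  constructor
  · intro hA x y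
    have h1 : ∀ g : G, γ 1 g = g := by
      intro g
      have := hA 1 1 g
      rw [one_mul] at this
      exact ((γ 1).injective this).symm
    ext g
    have key : γ (γ y x) (γ y g) = γ y (γ x g) := by
      rw [← hA (γ y x) y g, hγ x y g]
    show γ (x⁻¹ * y⁻¹ * γ y x * y) g = g
    calc γ (x⁻¹ * y⁻¹ * γ y x * y) g
        = γ (x⁻¹ * y⁻¹ * γ y x) (γ y g) := hA _ y g
      _ = γ (x⁻¹ * y⁻¹) (γ (γ y x) (γ y g)) := hA _ _ _
      _ = γ (x⁻¹ * y⁻¹) (γ y (γ x g)) := by rw [key]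
      _ = γ x⁻¹ (γ y⁻¹ (γ y (γ x g))) := hA _ _ _
      _ = γ x⁻¹ (γ (y⁻¹ * y) (γ x g)) := by rw [hA y⁻¹ y]
      _ = γ x⁻¹ (γ x g) := by rw [inv_mul_cancel]; rw [h1]
      _ = γ (x⁻¹ * x) g := (hA _ _ _).symm
      _ = g := by rw [inv_mul_cancel, h1]
  · intro h x y g
    have key : ∀ a v : G, γ v = 1 → γ (a * v) g = γ a g := by
      intro a v hv
      have h2 := hγ a v g
      rw [hv] at h2
      simpa using h2
    calc γ (x * y) g
        = γ ((x * y) * (y⁻¹ * x⁻¹ * γ x y * x)) g := (key _ _ (h y x)).symm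
      _ = γ (γ x y * x) g := by group
      _ = γ x (γ y g) := hγ y x g
end

section
/- Let γ be a gamma function on a group (G,·) satisfying γ(β(x)) = β⁻¹ γ(x) β for all x ∈ G and all β ∈ Aut(G,·). Then γ is an anti-homomorphism: γ(x·y) = γ(y)γ(x) for all x, y ∈ G; hence γ is a bi-GF, i.e. the skew brace it defines is a bi-skew brace. -/
/-- A gamma function `γ` on `(G,·)` satisfying
`γ(β(x)) = β⁻¹ γ(x) β` for all `x ∈ G`, `β ∈ Aut(G)` (composition applying `β⁻¹`
first, written pointwise) is an anti-homomorphism `γ(x·y) = γ(y)γ(x)`;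
hence `γ` is a bi-GF. -/
theorem stmt12 {G : Type*} [Group G] (γ : G → MulAut G)
    (hγ : ∀ x y g : G, γ (γ y x * y) g = γ y (γ x g))
    (hβ : ∀ (x : G) (β : MulAut G) (g : G), γ (β x) g = β (γ x (β⁻¹ g))) :
    ∀ x y g : G, γ (x * y) g = γ x (γ y g) := by
  intro x y g
  have h1 := hγ ((γ y)⁻¹ x) y g
  have h2 := hβ ((γ y)⁻¹ x) (γ y) (γ y g)
  have h3 : γ y ((γ y)⁻¹ x) = x := (γ y).apply_symm_apply x
  have h4 : (γ y)⁻¹ (γ y g) = g := (γ y).symm_apply_apply g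
  rw [h3] at h1 h2
  rw [h4] at h2
  rw [h1, h2]
end

section
/- Let G be a group which is the internal semidirect product of a normal subgroup K ⊴ G by a subgroup H ≤ G (i.e. H ∩ K = {1} and H·K = G). Then the map γ : G → Aut(G) defined by γ(h·k) = (x ↦ h·x·h⁻¹) for h ∈ H and k ∈ K is well defined, satisfies the gamma functional equation γ(γ(y)(x)·y) = γ(x)γ(y), and is an anti-homomorphism γ(x·y) = γ(y)γ(x); that is, γ is a bi-GF on G. -/
/-- Childs: If `G` is the internal semidirect product of `K ⊴ G`
by `H ≤ G`, then `γ(h·k) = (x ↦ h·x·h⁻¹)` (for `h ∈ H`, `k ∈ K`) is a well-defined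
map `G → Aut(G)` satisfying the gamma functional equation and
`γ(x·y) = γ(y)γ(x)`; that is, `γ` is a bi-GF on `G`. -/
theorem stmt13 {G : Type*} [Group G] (H K : Subgroup G) [K.Normal]
    (hdisj : H ⊓ K = ⊥)
    (hHK : ∀ g : G, ∃ h ∈ H, ∃ k ∈ K, g = h * k) :
    ∃ γ : G → MulAut G,
      (∀ h ∈ H, ∀ k ∈ K, ∀ x : G, γ (h * k) x = h * x * h⁻¹) ∧
      (∀ x y g : G, γ (γ y x * y) g = γ y (γ x g)) ∧
      (∀ x y g : G, γ (x * y) g = γ x (γ y g)) := by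
  classical
  choose f hfH c hcK heq using hHK
  -- key: the H-component of h*k is h
  have key : ∀ h ∈ H, ∀ k ∈ K, f (h * k) = h := by
    intro h hh k hk
    have hE := heq (h * k)
    set a := f (h * k) with ha
    set b := c (h * k) with hb
    have h2 : a⁻¹ * h = b * k⁻¹ := by
      have h3 : a⁻¹ * (h * k) = b := by rw [hE]; group
      rw [← h3]; group
    have hmemH : a⁻¹ * h ∈ H := mul_mem (inv_mem (ha ▸ hfH (h * k))) hh
    have hmemK : a⁻¹ * h ∈ K := by
      rw [h2]; exact mul_mem (hb ▸ hcK (h * k)) (inv_mem hk)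
    have hmem : a⁻¹ * h ∈ H ⊓ K := ⟨hmemH, hmemK⟩
    rw [hdisj, Subgroup.mem_bot] at hmem
    exact inv_mul_eq_one.mp hmem
  refine ⟨fun x => MulAut.conj (f x), ?_, ?_, ?_⟩
  · intro h hh k hk x
    show MulAut.conj (f (h * k)) x = h * x * h⁻¹
    rw [key h hh k hk]; rfl
  · intro x y g
    obtain ⟨a, b, haH, hbK, hx⟩ : ∃ a b, a ∈ H ∧ b ∈ K ∧ x = a * b :=
      ⟨f x, c x, hfH x, hcK x, heq x⟩
    obtain ⟨a', b', haH', hbK', hy⟩ : ∃ a b, a ∈ H ∧ b ∈ K ∧ y = a * b :=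
      ⟨f y, c y, hfH y, hcK y, heq y⟩
    subst hx; subst hy
    show MulAut.conj (f (MulAut.conj (f (a' * b')) (a * b) * (a' * b'))) g
      = MulAut.conj (f (a' * b')) (MulAut.conj (f (a * b)) g)
    rw [key a' haH' b' hbK', key a haH b hbK]
    have h1 : MulAut.conj a' (a * b) * (a' * b') = (a' * a) * (b * b') := by
      simp only [MulAut.conj_apply]; group
    rw [h1, key _ (mul_mem haH' haH) _ (mul_mem hbK hbK')]
    simp [mul_assoc]
  · intro x y g
    obtain ⟨a, b, haH, hbK, hx⟩ : ∃ a b, a ∈ H ∧ b ∈ K ∧ x = a * b :=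
      ⟨f x, c x, hfH x, hcK x, heq x⟩
    obtain ⟨a', b', haH', hbK', hy⟩ : ∃ a b, a ∈ H ∧ b ∈ K ∧ y = a * b :=
      ⟨f y, c y, hfH y, hcK y, heq y⟩
    subst hx; subst hy
    show MulAut.conj (f ((a * b) * (a' * b'))) g
      = MulAut.conj (f (a * b)) (MulAut.conj (f (a' * b')) g)
    rw [key a haH b hbK, key a' haH' b' hbK']
    have h1 : (a * b) * (a' * b') = (a * a') * ((a'⁻¹ * b * a') * b') := by group
    have hmem : (a'⁻¹ * b * a') * b' ∈ K := by
      refine mul_mem ?_ hbK'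
      simpa using Subgroup.Normal.conj_mem ‹K.Normal› _ hbK a'⁻¹
    rw [h1, key _ (mul_mem haH haH') _ hmem]
    simp [mul_assoc]
end

section
/- Let G be a group and H, K ≤ G subgroups with K normal in G, H·K = G, and H ∩ K contained in the center Z(G). Then the map γ : G → Aut(G) defined by γ(h·k) = (x ↦ h·x·h⁻¹) for h ∈ H and k ∈ K is well defined (independent of the chosen decomposition), satisfies the gamma functional equation γ(γ(y)(x)·y) = γ(x)γ(y), and is an anti-homomorphism γ(x·y) = γ(y)γ(x); that is, γ is a bi-GF on G. -/
/-- If `K ⊴ G`, `H ≤ G`, `H·K = G` and `H ∩ K ≤ Z(G)`, then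
`γ(h·k) = (x ↦ h·x·h⁻¹)` (for `h ∈ H`, `k ∈ K`) is a well-defined map
`G → Aut(G)` satisfying the gamma functional equation and
`γ(x·y) = γ(y)γ(x)`; that is, `γ` is a bi-GF on `G`. -/
theorem stmt14 {G : Type*} [Group G] (H K : Subgroup G) [K.Normal]
    (hcap : H ⊓ K ≤ Subgroup.center G)
    (hHK : ∀ g : G, ∃ h ∈ H, ∃ k ∈ K, g = h * k) :
    ∃ γ : G → MulAut G,
      (∀ h ∈ H, ∀ k ∈ K, ∀ x : G, γ (h * k) x = h * x * h⁻¹) ∧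
      (∀ x y g : G, γ (γ y x * y) g = γ y (γ x g)) ∧
      (∀ x y g : G, γ (x * y) g = γ x (γ y g)) := by
  have hwd : ∀ h₁ ∈ H, ∀ k₁ ∈ K, ∀ h₂ ∈ H, ∀ k₂ ∈ K, h₁ * k₁ = h₂ * k₂ →
      ∀ x : G, h₁ * x * h₁⁻¹ = h₂ * x * h₂⁻¹ := by
    intro h₁ hh₁ k₁ hk₁ h₂ hh₂ k₂ hk₂ heq x
    have hkk : h₂⁻¹ * h₁ = k₂ * k₁⁻¹ := by
      calc h₂⁻¹ * h₁ = h₂⁻¹ * (h₁ * k₁) * k₁⁻¹ := by group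
        _ = h₂⁻¹ * (h₂ * k₂) * k₁⁻¹ := by rw [heq]
        _ = k₂ * k₁⁻¹ := by group
    have hz : h₂⁻¹ * h₁ ∈ Subgroup.center G := by
      refine hcap ⟨H.mul_mem (H.inv_mem hh₂) hh₁, ?_⟩
      rw [hkk]; exact K.mul_mem hk₂ (K.inv_mem hk₁)
    have hc := (Subgroup.mem_center_iff.mp hz) x
    calc h₁ * x * h₁⁻¹ = h₂ * ((h₂⁻¹ * h₁) * x) * h₁⁻¹ := by group
      _ = h₂ * (x * (h₂⁻¹ * h₁)) * h₁⁻¹ := by rw [hc]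
      _ = h₂ * x * h₂⁻¹ := by group
  set γ : G → MulAut G := fun g => MulAut.conj (hHK g).choose with hγdef
  have key : ∀ h ∈ H, ∀ k ∈ K, ∀ x : G, γ (h * k) x = h * x * h⁻¹ := by
    intro h hh k hk x
    obtain ⟨hc1, k', hk', hgeq⟩ := (hHK (h * k)).choose_spec
    have := hwd _ hc1 k' hk' h hh k hk hgeq.symm x
    simpa [hγdef, MulAut.conj] using this
  refine ⟨γ, key, ?_, ?_⟩
  · intro x y g
    obtain ⟨h, hh, k, hk, hy⟩ := hHK y
    obtain ⟨h', hh', k', hk', hx⟩ := hHK x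
    have e1 : γ y x * y = (h * h') * (k' * k) := by
      rw [hy, key h hh k hk x, hx]; group
    rw [e1, key (h * h') (H.mul_mem hh hh') (k' * k) (K.mul_mem hk' hk) g,
        hy, key h hh k hk, hx, key h' hh' k' hk']
    group
  · intro x y g
    obtain ⟨h, hh, k, hk, hy⟩ := hHK y
    obtain ⟨h', hh', k', hk', hx⟩ := hHK x
    have hmem : (h⁻¹ * k' * h) * k ∈ K := by
      have : h⁻¹ * k' * h⁻¹⁻¹ ∈ K := Subgroup.Normal.conj_mem ‹K.Normal› k' hk' h⁻¹
      rw [inv_inv] at this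
      exact K.mul_mem this hk
    have e1 : x * y = (h' * h) * ((h⁻¹ * k' * h) * k) := by
      rw [hx, hy]; group
    rw [e1, key (h' * h) (H.mul_mem hh' hh) _ hmem g,
        hy, key h hh k hk, hx, key h' hh' k' hk']
    group
end

section
/- Let G be the internal semidirect product of a normal subgroup K ⊴ G by a subgroup H ≤ G (H ∩ K = {1}, H·K = G). Let γ' : H → Aut(G) be a map such that: every γ'(h) maps H onto H and K onto K; γ' satisfies the gamma functional equation on H, i.e. γ'(γ'(h₂)(h₁)·h₂) = γ'(h₁)γ'(h₂) for all h₁, h₂ ∈ H; and γ'(h₁·h₂) = γ'(h₂)γ'(h₁) for all h₁, h₂ ∈ H. Then the map γ : G → Aut(G) defined by γ(h·k) = γ'(h) for h ∈ H, k ∈ K is well defined, satisfies the gamma functional equation on G, and is an anti-homomorphism; that is, γ is a bi-GF on G. -/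
/-- Let `G` be the internal semidirect product of `K ⊴ G` by `H ≤ G`,
and let `γ' : H → Aut(G)` be a map such that every `γ'(h)` maps `H` onto `H` and
`K` onto `K`, `γ'` satisfies the gamma functional equation on `H`, and
`γ'(h₁·h₂) = γ'(h₂)γ'(h₁)`. Then `γ(h·k) = γ'(h)` is a well-defined map
`G → Aut(G)` satisfying the gamma functional equation and
`γ(x·y) = γ(y)γ(x)`; that is, `γ` is a bi-GF on `G`. -/
theorem stmt16 {G : Type*} [Group G] (H K : Subgroup G) [K.Normal]
    (hdisj : H ⊓ K = ⊥)
    (hHK : ∀ g : G, ∃ h ∈ H, ∃ k ∈ K, g = h * k)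
    (γ' : H → MulAut G)
    (hHmem : ∀ (h : H) (x : G), x ∈ H → γ' h x ∈ H)
    (hHonto : ∀ (h : H), ∀ x ∈ H, ∃ y ∈ H, γ' h y = x)
    (hKmem : ∀ (h : H) (x : G), x ∈ K → γ' h x ∈ K)
    (hKonto : ∀ (h : H), ∀ x ∈ K, ∃ y ∈ K, γ' h y = x)
    (hGFE : ∀ (h₁ h₂ : H) (g : G),
      γ' ⟨γ' h₂ ↑h₁ * ↑h₂, mul_mem (hHmem h₂ ↑h₁ h₁.2) h₂.2⟩ g = γ' h₂ (γ' h₁ g))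
    (hanti : ∀ (h₁ h₂ : H) (g : G), γ' (h₁ * h₂) g = γ' h₁ (γ' h₂ g)) :
    ∃ γ : G → MulAut G,
      (∀ (h : H) (k : K), γ (↑h * ↑k) = γ' h) ∧
      (∀ x y g : G, γ (γ y x * y) g = γ y (γ x g)) ∧
      (∀ x y g : G, γ (x * y) g = γ x (γ y g)) := by
  classical
  choose φ hφH κ hκK hφκ using hHK
  have uniq : ∀ h k : G, h ∈ H → k ∈ K → φ (h * k) = h := by
    intro h k hh hk
    have e := hφκ (h * k)
    have hmem : h⁻¹ * φ (h * k) ∈ H ⊓ K := by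
      rw [Subgroup.mem_inf]
      refine ⟨mul_mem (inv_mem hh) (hφH _), ?_⟩
      have e2 : h⁻¹ * φ (h * k) = k * (κ (h * k))⁻¹ := by
        have : φ (h * k) = h * k * (κ (h * k))⁻¹ := by
          rw [eq_mul_inv_iff_mul_eq]; exact e.symm
        rw [this]; group
      rw [e2]; exact mul_mem hk (inv_mem (hκK _))
    rw [hdisj, Subgroup.mem_bot] at hmem
    exact (inv_mul_eq_one.mp hmem).symm
  set γ : G → MulAut G := fun g => γ' ⟨φ g, hφH g⟩ with hγ
  refine ⟨γ, ?_, ?_, ?_⟩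
  · intro h k
    have : φ (↑h * ↑k) = ↑h := uniq _ _ h.2 k.2
    simp only [hγ]
    congr 1
    exact Subtype.ext this
  · intro x y g
    set hx : H := ⟨φ x, hφH x⟩
    set hy : H := ⟨φ y, hφH y⟩
    have key : γ' hy x * y =
        (γ' hy (φ x) * φ y) * ((φ y)⁻¹ * γ' hy (κ x) * φ y * κ y) := by
      conv_lhs => rw [hφκ x, hφκ y]
      rw [map_mul]; group
    have hH1 : γ' hy (φ x) * φ y ∈ H := mul_mem (hHmem hy _ (hφH x)) (hφH y)
    have hK1 : (φ y)⁻¹ * γ' hy (κ x) * φ y * κ y ∈ K := by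
      refine mul_mem ?_ (hκK y)
      have := Subgroup.Normal.conj_mem ‹K.Normal› _ (hKmem hy _ (hκK x)) (φ y)⁻¹
      simpa [mul_assoc] using this
    have hφval : φ (γ' hy x * y) = γ' hy (φ x) * φ y := by
      rw [key]; exact uniq _ _ hH1 hK1
    have step : γ (γ y x * y) = γ' ⟨γ' hy ↑hx * ↑hy, mul_mem (hHmem hy ↑hx hx.2) hy.2⟩ := by
      simp only [hγ]
      congr 1
      exact Subtype.ext hφval
    rw [step, hGFE]
  · intro x y g
    set hx : H := ⟨φ x, hφH x⟩
    set hy : H := ⟨φ y, hφH y⟩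
    have key : x * y = (φ x * φ y) * ((φ y)⁻¹ * κ x * φ y * κ y) := by
      conv_lhs => rw [hφκ x, hφκ y]
      group
    have hH1 : φ x * φ y ∈ H := mul_mem (hφH x) (hφH y)
    have hK1 : (φ y)⁻¹ * κ x * φ y * κ y ∈ K := by
      refine mul_mem ?_ (hκK y)
      have := Subgroup.Normal.conj_mem ‹K.Normal› _ (hκK x) (φ y)⁻¹
      simpa [mul_assoc] using this
    have hφval : φ (x * y) = φ x * φ y := by
      rw [key]; exact uniq _ _ hH1 hK1
    have step : γ (x * y) = γ' (hx * hy) := by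
      simp only [hγ]
      congr 1
      exact Subtype.ext hφval
    rw [step, hanti]
end

section
/- Let G be a group and K a subgroup of the center Z(G) (so K is normal in G). Let Δ : G/K × G/K → K be a map which is a group homomorphism in each of its two variables separately. Then for every y ∈ G the map γ(y) : x ↦ Δ(xK, yK)·x is an automorphism of G, the map γ : G → Aut(G) satisfies the gamma functional equation γ(γ(y)(x)·y) = γ(x)γ(y), γ is both a homomorphism and an anti-homomorphism into Aut(G), and the values of γ pairwise commute; in particular γ is a bi-GF on G. -/
/-- Let `K ≤ Z(G)` and let `Δ : G/K × G/K → K` be a homomorphism in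
each variable separately. Then `γ(y) : x ↦ Δ(xK, yK)·x` defines a map
`γ : G → Aut(G)` which satisfies the gamma functional equation, is both a
homomorphism and an anti-homomorphism into `Aut(G)`, and its values pairwise
commute; in particular `γ` is a bi-GF on `G`. -/
theorem stmt17 {G : Type*} [Group G] (K : Subgroup G) [K.Normal]
    (hK : K ≤ Subgroup.center G)
    (Δ : G ⧸ K → G ⧸ K → K)
    (hΔl : ∀ a b c : G ⧸ K, Δ (a * b) c = Δ a c * Δ b c)
    (hΔr : ∀ a b c : G ⧸ K, Δ a (b * c) = Δ a b * Δ a c) :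
    ∃ γ : G → MulAut G,
      (∀ y x : G, γ y x = (Δ (x : G ⧸ K) (y : G ⧸ K) : G) * x) ∧
      (∀ x y g : G, γ (γ y x * y) g = γ y (γ x g)) ∧
      (∀ x y g : G, γ (x * y) g = γ y (γ x g)) ∧
      (∀ x y g : G, γ (x * y) g = γ x (γ y g)) ∧
      (∀ x y g : G, γ x (γ y g) = γ y (γ x g)) := by
  have hc : ∀ (a b : G ⧸ K) (g : G), g * (Δ a b : G) = (Δ a b : G) * g :=
    fun a b g => Subgroup.mem_center_iff.mp (hK (Δ a b).2) g
  have h1 : ∀ (a b : G ⧸ K), ((Δ a b : G) : G ⧸ K) = 1 :=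
    fun a b => (QuotientGroup.eq_one_iff _).mpr (Δ a b).2
  have hq : ∀ (a b : G ⧸ K) (x : G),
      (((Δ a b : G) * x : G) : G ⧸ K) = (x : G ⧸ K) := by
    intro a b x
    rw [QuotientGroup.mk_mul, h1, one_mul]
  refine ⟨fun y => {
    toFun := fun x => (Δ (x : G ⧸ K) (y : G ⧸ K) : G) * x
    invFun := fun x => ((Δ (x : G ⧸ K) (y : G ⧸ K) : G))⁻¹ * x
    left_inv := fun x => by dsimp only; rw [hq]; group
    right_inv := fun x => by
      dsimp only
      rw [show (((((Δ (x : G ⧸ K) (y : G ⧸ K) : G))⁻¹ * x : G)) : G ⧸ K)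
          = (x : G ⧸ K) by rw [QuotientGroup.mk_mul, QuotientGroup.mk_inv, h1]; group]
      group
    map_mul' := fun a b => by
      simp only [QuotientGroup.mk_mul, hΔl]
      push_cast
      simp only [← mul_assoc]
      rw [mul_assoc ((Δ (a : G ⧸ K) (y : G ⧸ K) : G)), ← hc (b : G ⧸ K) (y : G ⧸ K) a]
      simp only [mul_assoc]
    }, fun y x => rfl, ?_, ?_, ?_, ?_⟩ <;>
  · intro x y g
    simp only [MulEquiv.coe_mk, Equiv.coe_fn_mk, QuotientGroup.mk_mul, hq, hΔr, hΔl]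
    push_cast
    first
    | (simp only [← mul_assoc]; exact congrArg (· * g) (hc _ _ _))
    | simp only [← mul_assoc]
end

section
/- Let G be a group of nilpotency class at most 2 (all commutators [x,y] = x⁻¹y⁻¹xy are central) in which every element has a unique square root. For x, y ∈ G let s(x,y) be the unique element with s(x,y)² = [x,y]⁻¹. Then s(x,y) lies in the center Z(G), s(x,y) depends only on the cosets xZ(G) and yZ(G), and the induced map Δ : G/Z(G) × G/Z(G) → Z(G), Δ(xZ(G), yZ(G)) = s(x,y), is a group homomorphism in each variable separately. -/
/-- Let `G` have nilpotency class at most 2 (all commutators are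
central) and unique square roots, and let `s(x,y)` be the unique element with
`s(x,y)² = [x,y]⁻¹`. Then `s(x,y)` is central, depends only on the cosets of `x`
and `y` modulo `Z(G)`, and the induced map `Δ : G/Z(G) × G/Z(G) → Z(G)` is a
homomorphism in each variable separately. -/
theorem stmt18 {G : Type*} [Group G]
    (hnil : ∀ x y : G, x⁻¹ * y⁻¹ * x * y ∈ Subgroup.center G)
    (hsq : ∀ g : G, ∃! h : G, h * h = g)
    (s : G → G → G)
    (hs : ∀ x y : G, s x y * s x y = (x⁻¹ * y⁻¹ * x * y)⁻¹) :
    (∀ x y : G, s x y ∈ Subgroup.center G) ∧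
    (∀ x x' y y' : G, x⁻¹ * x' ∈ Subgroup.center G →
      y⁻¹ * y' ∈ Subgroup.center G → s x y = s x' y') ∧
    (∀ x x' y : G, s (x * x') y = s x y * s x' y) ∧
    (∀ x y y' : G, s x (y * y') = s x y * s x y') := by
  have uniq : ∀ a b : G, a * a = b * b → a = b := by
    intro a b h
    obtain ⟨r, -, hr⟩ := hsq (b * b)
    exact (hr a h).trans (hr b rfl).symm
  have hcc : ∀ (x y g : G), g * (x⁻¹ * y⁻¹ * x * y) = (x⁻¹ * y⁻¹ * x * y) * g :=
    fun x y g => Subgroup.mem_center_iff.mp (hnil x y) g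
  -- invariance of the commutator under central perturbations
  have inv1 : ∀ (x y c : G), (∀ g : G, g * c = c * g) →
      (x * c)⁻¹ * y⁻¹ * (x * c) * y = x⁻¹ * y⁻¹ * x * y := by
    intro x y c h
    calc (x * c)⁻¹ * y⁻¹ * (x * c) * y
        = c⁻¹ * ((x⁻¹ * y⁻¹ * x) * c) * y := by group
      _ = c⁻¹ * (c * (x⁻¹ * y⁻¹ * x)) * y := by rw [h]
      _ = x⁻¹ * y⁻¹ * x * y := by group
  have inv2 : ∀ (x y d : G), (∀ g : G, g * d = d * g) →
      x⁻¹ * (y * d)⁻¹ * x * (y * d) = x⁻¹ * y⁻¹ * x * y := by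
    intro x y d h
    calc x⁻¹ * (y * d)⁻¹ * x * (y * d)
        = x⁻¹ * (d⁻¹ * ((y⁻¹ * x * y) * d)) := by group
      _ = x⁻¹ * (d⁻¹ * (d * (y⁻¹ * x * y))) := by rw [h]
      _ = x⁻¹ * y⁻¹ * x * y := by group
  have hcen : ∀ x y : G, s x y ∈ Subgroup.center G := by
    intro x y
    rw [Subgroup.mem_center_iff]
    intro g
    have h1 : (g * s x y * g⁻¹) * (g * s x y * g⁻¹) = s x y * s x y := by
      have h2 : g * (s x y * s x y) * g⁻¹ = s x y * s x y := by
        rw [hs]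
        rw [Subgroup.mem_center_iff.mp (Subgroup.inv_mem _ (hnil x y)) g]
        group
      calc (g * s x y * g⁻¹) * (g * s x y * g⁻¹)
          = g * (s x y * s x y) * g⁻¹ := by group
        _ = s x y * s x y := h2
    have h3 := uniq _ _ h1
    calc g * s x y = (g * s x y * g⁻¹) * g := by group
      _ = s x y * g := by rw [h3]
  refine ⟨hcen, ?_, ?_, ?_⟩
  · intro x x' y y' hx hy
    apply uniq
    rw [hs, hs]
    congr 1
    have hx' : x' = x * (x⁻¹ * x') := by group
    have hy' : y' = y * (y⁻¹ * y') := by group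
    rw [hx', hy', inv1 _ _ _ (fun g => Subgroup.mem_center_iff.mp hx g),
      inv2 _ _ _ (fun g => Subgroup.mem_center_iff.mp hy g)]
  · intro x x' y
    apply uniq
    rw [hs]
    have hcomm : (x * x')⁻¹ * y⁻¹ * (x * x') * y
        = (x⁻¹ * y⁻¹ * x * y) * (x'⁻¹ * y⁻¹ * x' * y) := by
      calc (x * x')⁻¹ * y⁻¹ * (x * x') * y
          = x'⁻¹ * ((x⁻¹ * y⁻¹ * x * y) * (y⁻¹ * x' * y)) := by group
        _ = x'⁻¹ * ((y⁻¹ * x' * y) * (x⁻¹ * y⁻¹ * x * y)) := by rw [hcc x y]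
        _ = (x'⁻¹ * y⁻¹ * x' * y) * (x⁻¹ * y⁻¹ * x * y) := by group
        _ = (x⁻¹ * y⁻¹ * x * y) * (x'⁻¹ * y⁻¹ * x' * y) := by rw [← hcc x y]
    rw [hcomm]
    symm
    have hsw : s x' y * s x y = s x y * s x' y :=
      Subgroup.mem_center_iff.mp (hcen x y) (s x' y)
    calc s x y * s x' y * (s x y * s x' y)
        = s x y * (s x' y * s x y) * s x' y := by group
      _ = s x y * (s x y * s x' y) * s x' y := by rw [hsw]
      _ = (s x y * s x y) * (s x' y * s x' y) := by group
      _ = (x⁻¹ * y⁻¹ * x * y)⁻¹ * (x'⁻¹ * y⁻¹ * x' * y)⁻¹ := by rw [hs, hs]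
      _ = ((x⁻¹ * y⁻¹ * x * y) * (x'⁻¹ * y⁻¹ * x' * y))⁻¹ := by
          rw [← mul_inv_rev, hcc]
  · intro x y y'
    apply uniq
    rw [hs]
    have hcomm : x⁻¹ * (y * y')⁻¹ * x * (y * y')
        = (x⁻¹ * y⁻¹ * x * y) * (x⁻¹ * y'⁻¹ * x * y') := by
      calc x⁻¹ * (y * y')⁻¹ * x * (y * y')
          = x⁻¹ * y'⁻¹ * (x * ((x⁻¹ * y⁻¹ * x * y) * y')) := by group
        _ = x⁻¹ * y'⁻¹ * (x * (y' * (x⁻¹ * y⁻¹ * x * y))) := by rw [← hcc x y]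
        _ = (x⁻¹ * y'⁻¹ * x * y') * (x⁻¹ * y⁻¹ * x * y) := by group
        _ = (x⁻¹ * y⁻¹ * x * y) * (x⁻¹ * y'⁻¹ * x * y') := by rw [← hcc x y]
    rw [hcomm]
    symm
    have hsw : s x y' * s x y = s x y * s x y' :=
      Subgroup.mem_center_iff.mp (hcen x y) (s x y')
    calc s x y * s x y' * (s x y * s x y')
        = s x y * (s x y' * s x y) * s x y' := by group
      _ = s x y * (s x y * s x y') * s x y' := by rw [hsw]
      _ = (s x y * s x y) * (s x y' * s x y') := by group
      _ = (x⁻¹ * y⁻¹ * x * y)⁻¹ * (x⁻¹ * y'⁻¹ * x * y')⁻¹ := by rw [hs, hs]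
      _ = ((x⁻¹ * y⁻¹ * x * y) * (x⁻¹ * y'⁻¹ * x * y'))⁻¹ := by
          rw [← mul_inv_rev, hcc]
end

section
/- Let G = (G,·) be a group of nilpotency class at most 2 in which every element has a unique square root, and for x, y ∈ G let s(x,y) be the unique element with s(x,y)² = [x,y]⁻¹. Define x ∘ y := s(x,y)·x·y. Then (G,∘) is an abelian group, the triple (G,·,∘) satisfies the skew brace axiom (x·y) ∘ z = (x ∘ z)·z⁻¹·(y ∘ z) for all x, y, z ∈ G, and the triple (G,∘,·) satisfies the skew brace axiom (x ∘ y)·z = (x·z) ∘ z^{⊖} ∘ (y·z) for all x, y, z ∈ G, where z^{⊖} is the inverse of z in (G,∘); hence (G,∘,·) is a brace whose circle group is the original group (G,·). -/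
/-- Let `G` have nilpotency class at most 2 and unique square roots,
let `s(x,y)` be the unique element with `s(x,y)² = [x,y]⁻¹`, and set
`x ∘ y = s(x,y)·x·y`. Then `(G,∘)` is an abelian group, `(G,·,∘)` satisfies the
skew brace axiom `(x·y) ∘ z = (x ∘ z)·z⁻¹·(y ∘ z)`, and `(G,∘,·)` satisfies the
skew brace axiom `(x ∘ y)·z = (x·z) ∘ z^⊖ ∘ (y·z)` (`z^⊖` the `∘`-inverse of `z`);
hence `(G,∘,·)` is a brace with circle group `(G,·)`. -/
theorem stmt19 {G : Type*} [Group G]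
    (hnil : ∀ x y : G, x⁻¹ * y⁻¹ * x * y ∈ Subgroup.center G)
    (hsq : ∀ g : G, ∃! h : G, h * h = g)
    (s : G → G → G)
    (hs : ∀ x y : G, s x y * s x y = (x⁻¹ * y⁻¹ * x * y)⁻¹)
    (circ : G → G → G) (hcirc : ∀ x y : G, circ x y = s x y * x * y) :
    (∀ x y : G, circ x y = circ y x) ∧
    (∀ x y z : G, circ (circ x y) z = circ x (circ y z)) ∧
    (∀ x : G, circ x 1 = x ∧ circ 1 x = x) ∧
    (∀ x : G, ∃ y : G, circ x y = 1 ∧ circ y x = 1) ∧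
    (∀ x y z : G, circ (x * y) z = circ x z * z⁻¹ * circ y z) ∧
    (∀ x y z zi : G, circ zi z = 1 → circ z zi = 1 →
      circ x y * z = circ (circ (x * z) zi) (y * z)) := by
  -- uniqueness of square roots
  have key : ∀ a b : G, a * a = b * b → a = b := by
    intro a b h
    exact (hsq (b * b)).unique h rfl
  -- commutators are central
  have hC : ∀ x y g : G, g * (x⁻¹ * y⁻¹ * x * y) = (x⁻¹ * y⁻¹ * x * y) * g := by
    intro x y g
    exact (Subgroup.mem_center_iff.mp (hnil x y) g)
  have hCi : ∀ x y g : G, g * (x⁻¹ * y⁻¹ * x * y)⁻¹ = (x⁻¹ * y⁻¹ * x * y)⁻¹ * g := by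
    intro x y g
    calc g * (x⁻¹ * y⁻¹ * x * y)⁻¹
        = (x⁻¹ * y⁻¹ * x * y)⁻¹ * ((x⁻¹ * y⁻¹ * x * y) * g) * (x⁻¹ * y⁻¹ * x * y)⁻¹ := by
          group
      _ = (x⁻¹ * y⁻¹ * x * y)⁻¹ * (g * (x⁻¹ * y⁻¹ * x * y)) * (x⁻¹ * y⁻¹ * x * y)⁻¹ := by
          rw [← hC]
      _ = (x⁻¹ * y⁻¹ * x * y)⁻¹ * g := by group
  -- the square roots s x y are central
  have sc : ∀ x y g : G, g * s x y = s x y * g := by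
    intro x y g
    have h1 : (g * s x y * g⁻¹) * (g * s x y * g⁻¹) = s x y * s x y := by
      calc (g * s x y * g⁻¹) * (g * s x y * g⁻¹) = g * (s x y * s x y) * g⁻¹ := by group
        _ = g * (x⁻¹ * y⁻¹ * x * y)⁻¹ * g⁻¹ := by rw [hs]
        _ = (x⁻¹ * y⁻¹ * x * y)⁻¹ * g * g⁻¹ := by rw [hCi]
        _ = (x⁻¹ * y⁻¹ * x * y)⁻¹ := by group
        _ = s x y * s x y := (hs x y).symm
    have h2 := key _ _ h1
    calc g * s x y = (g * s x y * g⁻¹) * g := by group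
      _ = s x y * g := by rw [h2]
  have sci : ∀ x y g : G, g * (s x y)⁻¹ = (s x y)⁻¹ * g := by
    intro x y g
    calc g * (s x y)⁻¹ = (s x y)⁻¹ * (s x y * g) * (s x y)⁻¹ := by group
      _ = (s x y)⁻¹ * (g * s x y) * (s x y)⁻¹ := by rw [← sc]
      _ = (s x y)⁻¹ * g := by group
  -- s g h = 1 whenever g and h commute
  have s_comm_one : ∀ g h : G, g * h = h * g → s g h = 1 := by
    intro g h hgh
    apply key
    have h1 : g⁻¹ * h⁻¹ * g * h = 1 := by
      rw [mul_assoc (g⁻¹ * h⁻¹) g h, hgh]; group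
    rw [hs, h1]; group
  -- s y x = (s x y)⁻¹
  have sswap : ∀ x y : G, s y x = (s x y)⁻¹ := by
    intro x y
    apply key
    rw [hs]
    have h1 : (s x y)⁻¹ * (s x y)⁻¹ = (s x y * s x y)⁻¹ := by group
    rw [h1, hs]
    group
  -- bilinearity of the commutator
  have hbl : ∀ x y z : G,
      (x * y)⁻¹ * z⁻¹ * (x * y) * z = (x⁻¹ * z⁻¹ * x * z) * (y⁻¹ * z⁻¹ * y * z) := by
    intro x y z
    calc (x * y)⁻¹ * z⁻¹ * (x * y) * z
        = y⁻¹ * (x⁻¹ * z⁻¹ * x * z) * (z⁻¹ * y * z) := by group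
      _ = (x⁻¹ * z⁻¹ * x * z) * y⁻¹ * (z⁻¹ * y * z) := by rw [hC x z y⁻¹]
      _ = (x⁻¹ * z⁻¹ * x * z) * (y⁻¹ * z⁻¹ * y * z) := by group
  have hbr : ∀ x y z : G,
      x⁻¹ * (y * z)⁻¹ * x * (y * z) = (x⁻¹ * y⁻¹ * x * y) * (x⁻¹ * z⁻¹ * x * z) := by
    intro x y z
    calc x⁻¹ * (y * z)⁻¹ * x * (y * z)
        = (x⁻¹ * z⁻¹ * x * z) * (z⁻¹ * (x⁻¹ * y⁻¹ * x * y) * z) := by group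
      _ = (x⁻¹ * z⁻¹ * x * z) * ((x⁻¹ * y⁻¹ * x * y) * z⁻¹ * z) := by rw [hC x y z⁻¹]
      _ = (x⁻¹ * z⁻¹ * x * z) * (x⁻¹ * y⁻¹ * x * y) := by group
      _ = (x⁻¹ * y⁻¹ * x * y) * (x⁻¹ * z⁻¹ * x * z) := hC x y _
  -- bilinearity of s
  have sml : ∀ x y z : G, s (x * y) z = s x z * s y z := by
    intro x y z
    apply key
    calc s (x * y) z * s (x * y) z = ((x * y)⁻¹ * z⁻¹ * (x * y) * z)⁻¹ := hs _ _
      _ = ((x⁻¹ * z⁻¹ * x * z) * (y⁻¹ * z⁻¹ * y * z))⁻¹ := by rw [hbl x y z]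
      _ = (y⁻¹ * z⁻¹ * y * z)⁻¹ * (x⁻¹ * z⁻¹ * x * z)⁻¹ := by rw [mul_inv_rev]
      _ = (x⁻¹ * z⁻¹ * x * z)⁻¹ * (y⁻¹ * z⁻¹ * y * z)⁻¹ := by rw [hCi x z _]
      _ = (s x z * s x z) * (s y z * s y z) := by rw [hs, hs]
      _ = s x z * ((s x z * s y z) * s y z) := by group
      _ = s x z * ((s y z * s x z) * s y z) := by rw [← sc x z (s y z)]
      _ = (s x z * s y z) * (s x z * s y z) := by group
  have smr : ∀ x y z : G, s x (y * z) = s x y * s x z := by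
    intro x y z
    apply key
    calc s x (y * z) * s x (y * z) = (x⁻¹ * (y * z)⁻¹ * x * (y * z))⁻¹ := hs _ _
      _ = ((x⁻¹ * y⁻¹ * x * y) * (x⁻¹ * z⁻¹ * x * z))⁻¹ := by rw [hbr x y z]
      _ = (x⁻¹ * z⁻¹ * x * z)⁻¹ * (x⁻¹ * y⁻¹ * x * y)⁻¹ := by rw [mul_inv_rev]
      _ = (x⁻¹ * y⁻¹ * x * y)⁻¹ * (x⁻¹ * z⁻¹ * x * z)⁻¹ := by rw [hCi x y _]
      _ = (s x y * s x y) * (s x z * s x z) := by rw [hs, hs]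
      _ = s x y * ((s x y * s x z) * s x z) := by group
      _ = s x y * ((s x z * s x y) * s x z) := by rw [← sc x y (s x z)]
      _ = (s x y * s x z) * (s x y * s x z) := by group
  have sinv : ∀ x z : G, s x z⁻¹ = (s x z)⁻¹ := by
    intro x z
    have h1 : s x (z * z⁻¹) = s x z * s x z⁻¹ := smr x z z⁻¹
    rw [mul_inv_cancel, s_comm_one x 1 (by group)] at h1
    exact (inv_eq_of_mul_eq_one_right h1.symm).symm
  -- circ pulls central factors out (left argument)
  have ccl : ∀ a w y : G, (∀ g : G, g * a = a * g) → circ (a * w) y = a * circ w y := by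
    intro a w y ha
    rw [hcirc, hcirc, sml a w y, s_comm_one a y (ha y).symm]
    calc (1 * s w y) * (a * w) * y = (s w y * a) * (w * y) := by group
      _ = (a * s w y) * (w * y) := by rw [ha (s w y)]
      _ = a * (s w y * w * y) := by group
  -- commutativity
  have hcomm : ∀ x y : G, circ x y = circ y x := by
    intro x y
    simp only [hcirc]
    rw [sswap x y]
    calc s x y * x * y
        = (s x y)⁻¹ * ((s x y * s x y) * (x * y)) := by group
      _ = (s x y)⁻¹ * ((x⁻¹ * y⁻¹ * x * y)⁻¹ * (x * y)) := by rw [hs]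
      _ = (s x y)⁻¹ * ((x * y) * (x⁻¹ * y⁻¹ * x * y)⁻¹) := by rw [hCi x y (x * y)]
      _ = (s x y)⁻¹ * y * x := by group
  -- associativity
  have hass : ∀ x y z : G, circ (circ x y) z = circ x (circ y z) := by
    intro x y z
    simp only [hcirc]
    rw [sml (s x y * x) y z, sml (s x y) x z,
      s_comm_one (s x y) z (sc x y z).symm,
      smr x (s y z * y) z, smr x (s y z) y,
      s_comm_one x (s y z) (sc y z x)]
    simp only [one_mul, mul_assoc]
    have h1 : s y z * (s x y * (x * (y * z))) = s x y * (s y z * (x * (y * z))) := by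
      rw [← mul_assoc, sc x y (s y z), mul_assoc]
    have h2 : s x z * (s x y * (s y z * (x * (y * z)))) =
        s x y * (s x z * (s y z * (x * (y * z)))) := by
      rw [← mul_assoc, sc x y (s x z), mul_assoc]
    have h3 : x * (s y z * (y * z)) = s y z * (x * (y * z)) := by
      rw [← mul_assoc, sc y z x, mul_assoc]
    rw [h1, h2, h3]
  -- identity
  have hid : ∀ x : G, circ x 1 = x ∧ circ 1 x = x := by
    intro x
    constructor
    · rw [hcirc, s_comm_one x 1 (by group)]; group
    · rw [hcirc, s_comm_one 1 x (by group)]; group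
  -- inverses
  have hinv : ∀ x : G, circ x x⁻¹ = 1 ∧ circ x⁻¹ x = 1 := by
    intro x
    constructor
    · rw [hcirc, s_comm_one x x⁻¹ (by group)]; group
    · rw [hcirc, s_comm_one x⁻¹ x (by group)]; group
  -- skew brace axiom for (G,·,∘)
  have hbrace : ∀ x y z : G, circ (x * y) z = circ x z * z⁻¹ * circ y z := by
    intro x y z
    simp only [hcirc]
    rw [sml x y z]
    simp only [mul_assoc]
    rw [mul_inv_cancel_left]
    have hx : x * (s y z * (y * z)) = s y z * (x * (y * z)) := by
      rw [← mul_assoc, sc y z x, mul_assoc]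
    rw [hx]
  refine ⟨hcomm, hass, hid, fun x => ⟨x⁻¹, (hinv x).1, (hinv x).2⟩, hbrace, ?_⟩
  -- skew brace axiom for (G,∘,·)
  intro x y z zi h1 h2
  have hzi : zi = z⁻¹ := by
    calc zi = circ zi 1 := ((hid zi).1).symm
      _ = circ zi (circ z z⁻¹) := by rw [(hinv z).1]
      _ = circ (circ zi z) z⁻¹ := (hass zi z z⁻¹).symm
      _ = circ 1 z⁻¹ := by rw [h1]
      _ = z⁻¹ := (hid z⁻¹).2
  subst hzi
  have e1 : circ (x * z) z⁻¹ = (s x z)⁻¹ * x := by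
    rw [hcirc, sml x z z⁻¹, sinv x z, s_comm_one z z⁻¹ (by group)]
    group
  rw [e1, ccl ((s x z)⁻¹) x (y * z) (sci x z), hcirc x (y * z), smr x y z, hcirc x y]
  simp only [mul_assoc]
  have hsw : (s x z)⁻¹ * (s x y * (s x z * (x * (y * z)))) =
      s x y * ((s x z)⁻¹ * (s x z * (x * (y * z)))) := by
    rw [← mul_assoc, ← sci x z (s x y), mul_assoc]
  rw [hsw, inv_mul_cancel_left]
end
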